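/- Let A be a finite alphabet with at least two letters, u ∈ A⁺ a nonempty word, π a permutation of A, w a prefix of Pal(u), σ the w-conjugate of ψ_u ∘ π, and a_min the minimal letter of σ. Then σ(a_min) is a suffix of σ(a) for every a ∈ A if and only if |w| ≥ |σ(a_min)|. -/

import Mathlib

open List

section EpiDefs

variable {A : Type*}

/-- The episturmian generator ψ_a : a ↦ a, b ↦ ab for b ≠ a, as a map on words. -/
def psiL [DecidableEq A] (a : A) : List A → List A :=
  fun u => (u.map (fun b => if b = a then [a] else [a, b])).flatten

/-- The episturmian generator ψ̄_a : a ↦ a, b ↦ ba for b ≠ a, as a map on words. -/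
def psibarL [DecidableEq A] (a : A) : List A → List A :=
  fun u => (u.map (fun b => if b = a then [a] else [b, a])).flatten

/-- ψ_{u₁⋯uₙ} = ψ_{u₁} ∘ ⋯ ∘ ψ_{uₙ}. -/
def psiW [DecidableEq A] (u : List A) : List A → List A :=
  u.foldr (fun a f => psiL a ∘ f) id

/-- ψ̄_{u₁⋯uₙ} = ψ̄_{u₁} ∘ ⋯ ∘ ψ̄_{uₙ}. -/
def psibarW [DecidableEq A] (u : List A) : List A → List A :=
  u.foldr (fun a f => psibarL a ∘ f) id

/-- There is a shortest palindrome having `x` as a prefix. -/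
theorem exists_isPalClosure (x : List A) :
    ∃ p : List A, (p.reverse = p ∧ x <+: p) ∧
      ∀ q : List A, q.reverse = q → x <+: q → p.length ≤ q.length := by
  classical
  have hex : ∃ n : ℕ, ∃ p : List A, (p.reverse = p ∧ x <+: p) ∧ p.length = n :=
    ⟨(x ++ x.reverse).length, x ++ x.reverse, ⟨by simp, ⟨x.reverse, rfl⟩⟩, rfl⟩
  obtain ⟨p, hp, hlen⟩ := Nat.find_spec hex
  refine ⟨p, hp, fun q h1 h2 => ?_⟩
  rw [hlen]
  exact Nat.find_le ⟨q, ⟨h1, h2⟩, rfl⟩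

/-- `palPlus x = x⁽⁺⁾` is the shortest palindrome having `x` as a prefix. -/
noncomputable def palPlus (x : List A) : List A :=
  Classical.choose (exists_isPalClosure x)

/-- Iterated palindromic closure: Pal(ε) = ε, Pal(ua) = (Pal(u)a)⁽⁺⁾. -/
noncomputable def pal (u : List A) : List A :=
  u.foldl (fun p a => palPlus (p ++ [a])) []

/-- Longest common prefix. -/
def gcp [DecidableEq A] : List A → List A → List A
  | a :: x, b :: y => if a = b then a :: gcp x y else []
  | _, _ => []

/-- Longest common suffix. -/
def gcs [DecidableEq A] (x y : List A) : List A :=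
  (gcp x.reverse y.reverse).reverse

/-- The language of a (primitive) substitution: factors of σⁿ(a). -/
def LangS (σ : List A → List A) : Set (List A) :=
  {x | ∃ (n : ℕ) (a : A), x <:+: σ^[n] [a]}

/-- The language of the episturmian shift directed by `d`. -/
def LangD (d : ℕ → A) : Set (List A) :=
  {x | ∃ n : ℕ, x <:+: pal ((List.range n).map d)}

def LeftSpecial (L : Set (List A)) (v : List A) : Prop :=
  ∃ a b : A, a ≠ b ∧ a :: v ∈ L ∧ b :: v ∈ L

def RightSpecial (L : Set (List A)) (v : List A) : Prop :=
  ∃ a b : A, a ≠ b ∧ v ++ [a] ∈ L ∧ v ++ [b] ∈ L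

/-- The left return set of `u` in the language `L`. -/
def leftReturn (L : Set (List A)) (u : List A) : Set (List A) :=
  {r | r ++ u ∈ L ∧ (∃ s : List A, s ≠ [] ∧ r ++ u = u ++ s) ∧
    ¬∃ p q : List A, p ≠ [] ∧ q ≠ [] ∧ r ++ u = p ++ u ++ q}

/-- The right return set of `u` in the language `L`. -/
def rightReturn (L : Set (List A)) (u : List A) : Set (List A) :=
  {r | u ++ r ∈ L ∧ (∃ p : List A, p ≠ [] ∧ u ++ r = p ++ u) ∧
    ¬∃ p q : List A, p ≠ [] ∧ q ≠ [] ∧ u ++ r = p ++ u ++ q}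

/-- `σ` is an endomorphism of the free monoid A*. -/
def IsListHom (σ : List A → List A) : Prop :=
  ∀ x y : List A, σ (x ++ y) = σ x ++ σ y

/-- Primitivity of a substitution. -/
def IsPrimitiveSubst (σ : List A → List A) : Prop :=
  ∃ k : ℕ, 1 ≤ k ∧ ∀ a b : A, b ∈ σ^[k] [a]

/-- At least two distinct letters occur infinitely often in `d`. -/
def NonDegenerate (d : ℕ → A) : Prop :=
  ∃ a b : A, a ≠ b ∧ (∀ N : ℕ, ∃ n : ℕ, N ≤ n ∧ d n = a) ∧
    (∀ N : ℕ, ∃ n : ℕ, N ≤ n ∧ d n = b)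

end EpiDefs

section AuxLemmas
variable {A : Type*} [DecidableEq A]

lemma psiL_append' (a : A) (x y : List A) : psiL a (x ++ y) = psiL a x ++ psiL a y := by
  simp [psiL]

lemma psiW_ends' (u : List A) (b : A) : ∃ y : List A, psiW u [b] = y ++ [b] := by
  induction u with
  | nil => exact ⟨[], rfl⟩
  | cons c u ih =>
    obtain ⟨y, hy⟩ := ih
    have hc : psiW (c :: u) [b] = psiL c (psiW u [b]) := rfl
    rw [hc, hy, psiL_append']
    by_cases h : b = c
    · exact ⟨psiL c y, by simp [psiL, h]⟩
    · exact ⟨psiL c y ++ [c], by simp [psiL, h]⟩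

lemma suffix_of_suffix_length_le' {x y z : List A} (h1 : x <:+ z) (h2 : y <:+ z)
    (h : x.length ≤ y.length) : x <:+ y := by
  rw [← List.reverse_prefix] at h1 h2 ⊢
  exact List.prefix_of_prefix_length_le h1 h2 (by simpa using h)

lemma suffix_append_cancel' {x y w : List A} (h : x ++ w <:+ y ++ w) : x <:+ y := by
  rw [← List.reverse_prefix] at h ⊢
  simpa using h

end AuxLemmas

/-- σ(a_min) is a suffix of every σ(a) iff |w| ≥ |σ(a_min)|. -/
theorem minletter_suffix_iff {A : Type*} [Fintype A] [DecidableEq A]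
    (hA : 1 < Fintype.card A) (u : List A) (hu : u ≠ []) (π : Equiv.Perm A)
    (w : List A) (hw : w <+: pal u)
    (σ : List A → List A) (hσhom : IsListHom σ)
    (hσ : ∀ a : A, psiW u [π a] ++ w = w ++ σ [a])
    (amin : A) (hmin : ∀ a : A, a ≠ amin → (σ [amin]).length < (σ [a]).length) :
    (∀ a : A, σ [amin] <:+ σ [a]) ↔ (σ [amin]).length ≤ w.length := by
  have hlen : ∀ a : A, (σ [a]).length = (psiW u [π a]).length := by
    intro a
    have := congrArg List.length (hσ a)
    simp only [List.length_append] at this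
    omega
  constructor
  · intro hall
    by_contra hcon
    push_neg at hcon
    obtain ⟨a, ha⟩ := Fintype.exists_ne_of_one_lt_card hA amin
    have key : ∀ b : A, w.length < (σ [b]).length →
        ∃ t : List A, t ≠ [] ∧ t.getLast? = some (π b) ∧ t ++ w = σ [b] := by
      intro b hb
      have hsuf : w <:+ σ [b] := by
        refine suffix_of_suffix_length_le' (z := w ++ σ [b]) ?_ (List.suffix_append _ _) hb.le
        rw [← hσ b]
        exact List.suffix_append _ _
      obtain ⟨t, ht⟩ := hsuf
      have htne : t ≠ [] := by
        intro h0
        rw [h0, List.nil_append] at ht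
        rw [← ht] at hb
        exact lt_irrefl _ hb
      have heq : psiW u [π b] = w ++ t := by
        have h2 : psiW u [π b] ++ w = (w ++ t) ++ w := by
          rw [List.append_assoc, ht, hσ b]
        exact List.append_cancel_right h2
      obtain ⟨y, hy⟩ := psiW_ends' u (π b)
      have hglast : t.getLast? = some (π b) := by
        have : (w ++ t).getLast? = some (π b) := by
          rw [← heq, hy]
          exact List.getLast?_concat
        rwa [List.getLast?_append_of_ne_nil _ htne] at this
      exact ⟨t, htne, hglast, ht⟩
    obtain ⟨tm, htmne, html, htmeq⟩ := key amin hcon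
    obtain ⟨ta, htane, htal, htaeq⟩ := key a (hcon.trans (hmin a ha))
    have hsuf2 : tm <:+ ta := by
      apply suffix_append_cancel' (w := w)
      rw [htmeq, htaeq]
      exact hall a
    obtain ⟨s, hs⟩ := hsuf2
    have : ta.getLast? = tm.getLast? := by
      rw [← hs]
      exact List.getLast?_append_of_ne_nil _ htmne
    rw [htal, html, Option.some_inj] at this
    exact ha (π.injective this)
  · intro h a
    have h1 : σ [amin] <:+ w := by
      refine suffix_of_suffix_length_le' (z := psiW u [π amin] ++ w)
        ?_ (List.suffix_append _ _) h
      rw [hσ amin]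
      exact List.suffix_append _ _
    have h2 : (σ [amin]).length ≤ (σ [a]).length := by
      by_cases hae : a = amin
      · rw [hae]
      · exact (hmin a hae).le
    have hw2 : w <:+ w ++ σ [a] := by
      rw [← hσ a]
      exact List.suffix_append _ _
    exact suffix_of_suffix_length_le' (h1.trans hw2) (List.suffix_append _ _) h2
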